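/- Let A consist of the covectors e¹, 2e¹, e², e¹+e², e¹−e² on ℂ² with nonzero multiplicities c₁, c̃₁, c₂, c₊, c₋, with non-degenerate form G = Σ c_α α⊗α. Then A is a trigonometric ∨-system if and only if c₊ = c₋ and 2c̃₁c₂ = c₊(c₁ − c₂). Moreover the condition c₊ = c₋ is equivalent to (e¹, e²) = 0 in the G-induced inner product. -/

import Mathlib

open scoped BigOperators

noncomputable section

abbrev V (n : ℕ) := Fin n → ℂ
abbrev D (n : ℕ) := Module.Dual ℂ (V n)

/-- Wedge of two covectors: `(α∧β)(a,b) = α(a)β(b) − α(b)β(a)`. -/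
def wedge {n : ℕ} (α β : D n) (a b : V n) : ℂ := α a * β b - α b * β a

/-- `β` is parallel (collinear) to `α`. -/
def Parallel {n : ℕ} (α β : D n) : Prop := ∃ t : ℂ, β = t • α

/-- Two covectors belong to a common `α`-series: their difference or sum is an
integer multiple of `α`. -/
def SameSer {n : ℕ} (α γ₁ γ₂ : D n) : Prop :=
  ∃ m : ℤ, γ₁ - γ₂ = (m : ℂ) • α ∨ γ₁ + γ₂ = (m : ℂ) • α

/-- `Γ` is a (maximal) `α`-series of the system `A`. -/
def IsSeries {n : ℕ} (A : Finset (D n)) (α : D n) (Γ : Finset (D n)) : Prop :=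
  Γ ⊆ A ∧ (∀ β ∈ Γ, ¬ Parallel α β) ∧
    (∀ γ₁ ∈ Γ, ∀ γ₂ ∈ Γ, SameSer α γ₁ γ₂) ∧
    (∀ β ∈ A, ¬ Parallel α β → (∃ γ ∈ Γ, SameSer α β γ) → β ∈ Γ)

/-- The trigonometric ∨-system series conditions:
for every `α ∈ A` and every `α`-series `Γ`, `Σ_{β∈Γ} c_β (α,β) α∧β = 0`. -/
def SeriesCond {n : ℕ} (A : Finset (D n)) (c : D n → ℂ) (ip : D n → D n → ℂ) : Prop :=
  ∀ α ∈ A, ∀ Γ : Finset (D n), IsSeries A α Γ →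
    ∀ a b : V n, ∑ β ∈ Γ, c β * ip α β * wedge α β a b = 0

/-- The bilinear form `G(u,v) = Σ_{α∈A} c_α α(u) α(v)`. -/
def Gform {n : ℕ} (A : Finset (D n)) (c : D n → ℂ) (u v : V n) : ℂ :=
  ∑ α ∈ A, c α * α u * α v

/-- Non-degeneracy of a bilinear form on `ℂⁿ`. -/
def NonDeg {n : ℕ} (B : V n → V n → ℂ) : Prop :=
  ∀ u : V n, (∀ v : V n, B u v = 0) → u = 0

/-- All covectors of `A` lie in an `n`-dimensional lattice. -/
def InLattice {n : ℕ} (A : Finset (D n)) : Prop :=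
  ∃ f : Fin n → D n, LinearIndependent ℂ f ∧
    ∀ β ∈ A, ∃ m : Fin n → ℤ, β = ∑ i, (m i : ℂ) • f i

/-- The `i`-th coordinate covector. -/
def coD {n : ℕ} (i : Fin n) : D n := LinearMap.proj i

/-- Partial derivative in the `i`-th coordinate direction. -/
def pd {n : ℕ} (i : Fin n) (f : V n → ℂ) (x : V n) : ℂ := fderiv ℂ f x (Pi.single i 1)

/-- Irreducibility: `A` does not split as a direct sum of two lower-dimensional systems. -/
def Irred {n : ℕ} (A : Finset (D n)) : Prop :=
  ¬ ∃ U₁ U₂ : Submodule ℂ (D n), U₁ ⊓ U₂ = ⊥ ∧ (∀ β ∈ A, β ∈ U₁ ∨ β ∈ U₂) ∧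
    (∃ β ∈ A, β ∉ U₁) ∧ (∃ β ∈ A, β ∉ U₂)

/-! `SameSer α` is an equivalence relation, so the `α`-series of `A` are `∅` and the classes
`seriesThrough A α β`; for the five covectors, written with integer coordinates as `cov p q`, these
classes are computed by deciding divisibilities. In coordinates `G` has Gram matrix
`!![c₁ + 4c̃₁ + c₊ + c₋, c₊ - c₋; c₊ - c₋, c₂ + c₊ + c₋]`, and `(ξ, η)` is read off its adjugate,
giving `det · (e¹, e²) = c₋ - c₊`. The `2e¹`-series `{e²}` forces `(2e¹, e²) = 0`, hence `c₊ = c₋`;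
the form is then diagonal, and the `(e¹ + e²)`-series `{e¹, e²}` yields
`c₂ (c₁ + 4c̃₁ + 2c₊) = c₁ (c₂ + 2c₊)`, which is twice the stated relation. Conversely, under the
two conditions each of the nine nonempty series sums vanishes. -/

section Series

variable {n : ℕ}

theorem SameSer.symm {α γ₁ γ₂ : D n} : SameSer α γ₁ γ₂ → SameSer α γ₂ γ₁ := by
  rintro ⟨m, h | h⟩
  · exact ⟨-m, Or.inl (by rw [Int.cast_neg, neg_smul, ← h, neg_sub])⟩
  · exact ⟨m, Or.inr (by rw [add_comm, h])⟩

theorem SameSer.trans {α γ₁ γ₂ γ₃ : D n} :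
    SameSer α γ₁ γ₂ → SameSer α γ₂ γ₃ → SameSer α γ₁ γ₃ := by
  rintro ⟨m, h | h⟩ ⟨k, h' | h'⟩
  · exact ⟨m + k, Or.inl (by rw [Int.cast_add, add_smul, ← h, ← h']; abel)⟩
  · exact ⟨m + k, Or.inr (by rw [Int.cast_add, add_smul, ← h, ← h']; abel)⟩
  · exact ⟨m - k, Or.inr (by rw [Int.cast_sub, sub_smul, ← h, ← h']; abel)⟩
  · exact ⟨m - k, Or.inl (by rw [Int.cast_sub, sub_smul, ← h, ← h']; abel)⟩

open Classical in
def seriesThrough (A : Finset (D n)) (α β : D n) : Finset (D n) :=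
  A.filter fun γ => ¬ Parallel α γ ∧ SameSer α β γ

theorem mem_seriesThrough {A : Finset (D n)} {α β γ : D n} :
    γ ∈ seriesThrough A α β ↔ γ ∈ A ∧ ¬ Parallel α γ ∧ SameSer α β γ := by
  classical
  simp [seriesThrough]

theorem isSeries_seriesThrough (A : Finset (D n)) (α β : D n) :
    IsSeries A α (seriesThrough A α β) := by
  refine ⟨fun γ hγ => (mem_seriesThrough.1 hγ).1, fun γ hγ => (mem_seriesThrough.1 hγ).2.1,
    fun γ₁ h₁ γ₂ h₂ => ?_, fun γ hγ hpar ⟨δ, hδ, hγδ⟩ => ?_⟩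
  · exact (mem_seriesThrough.1 h₁).2.2.symm.trans (mem_seriesThrough.1 h₂).2.2
  · exact mem_seriesThrough.2 ⟨hγ, hpar, (mem_seriesThrough.1 hδ).2.2.trans hγδ.symm⟩

theorem IsSeries.eq_seriesThrough {A Γ : Finset (D n)} {α β : D n} (hΓ : IsSeries A α Γ)
    (hβ : β ∈ Γ) : Γ = seriesThrough A α β := by
  obtain ⟨hsub, hpar, hser, hmax⟩ := hΓ
  ext γ
  rw [mem_seriesThrough]
  exact ⟨fun hγ => ⟨hsub hγ, hpar γ hγ, hser β hβ γ hγ⟩,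
    fun ⟨hγ, hγpar, hβγ⟩ => hmax γ hγ hγpar ⟨β, hβ, hβγ.symm⟩⟩

end Series

section Gram

open Matrix

variable {n : ℕ}

def coords (ξ : D n) : Fin n → ℂ := fun i => ξ (Pi.single i 1)

theorem coords_smul (t : ℂ) (ξ : D n) : coords (t • ξ) = t • coords ξ := rfl

theorem apply_eq_coords_dotProduct (ξ : D n) (v : V n) : ξ v = coords ξ ⬝ᵥ v := by
  conv_lhs => rw [pi_eq_sum_univ' v]
  simp [coords, dotProduct, mul_comm]

theorem coords_injective : Function.Injective (coords (n := n)) := fun ξ η h =>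
  LinearMap.ext fun v => by rw [apply_eq_coords_dotProduct, h, ← apply_eq_coords_dotProduct]

def Gmatrix (A : Finset (D n)) (c : D n → ℂ) : Matrix (Fin n) (Fin n) ℂ :=
  ∑ α ∈ A, c α • vecMulVec (coords α) (coords α)

theorem Gmatrix_transpose (A : Finset (D n)) (c : D n → ℂ) : (Gmatrix A c)ᵀ = Gmatrix A c := by
  simp [Gmatrix, transpose_sum, transpose_smul, transpose_vecMulVec]

theorem Gform_eq_dotProduct_mulVec (A : Finset (D n)) (c : D n → ℂ) (u v : V n) :
    Gform A c u v = u ⬝ᵥ Gmatrix A c *ᵥ v := by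
  simp only [Gform, Gmatrix, sum_mulVec, smul_mulVec, dotProduct_sum, dotProduct_smul,
    vecMulVec_mulVec, apply_eq_coords_dotProduct]
  refine Finset.sum_congr rfl fun α _ => ?_
  rw [op_smul_eq_mul, smul_eq_mul, dotProduct_comm u]
  ring

theorem nonDeg_Gform_iff (A : Finset (D n)) (c : D n → ℂ) :
    NonDeg (Gform A c) ↔ (Gmatrix A c).det ≠ 0 := by
  rw [← separatingLeft_iff_det_ne_zero, separatingLeft_def]
  simp only [NonDeg, Gform_eq_dotProduct_mulVec]

theorem apply_vee {A : Finset (D n)} {c : D n → ℂ} (hnd : NonDeg (Gform A c))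
    {vee : D n → V n} (hvee : ∀ ξ v, Gform A c (vee ξ) v = ξ v) (ξ η : D n) :
    ξ (vee η) = coords ξ ⬝ᵥ (Gmatrix A c)⁻¹ *ᵥ coords η := by
  have hG : Gmatrix A c *ᵥ vee η = coords η := by
    ext i
    rw [← Gmatrix_transpose, mulVec_transpose, ← dotProduct_single_one (vee η ᵥ* _),
      ← dotProduct_mulVec, ← Gform_eq_dotProduct_mulVec, hvee]
    rfl
  have hdet : IsUnit (Gmatrix A c).det := isUnit_iff_ne_zero.2 ((nonDeg_Gform_iff A c).1 hnd)
  rw [apply_eq_coords_dotProduct, ← hG, mulVec_mulVec, nonsing_inv_mul _ hdet, one_mulVec]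

end Gram

theorem Int.exists_eq_mul_and_eq_mul_iff {a b x y : ℤ} :
    (∃ m, x = m * a ∧ y = m * b) ↔ a ∣ x ∧ b ∣ y ∧ a * y = b * x := by
  constructor
  · rintro ⟨m, rfl, rfl⟩
    exact ⟨dvd_mul_left a m, dvd_mul_left b m, by ring⟩
  · rintro ⟨⟨k, rfl⟩, ⟨l, rfl⟩, h⟩
    rcases eq_or_ne a 0 with rfl | ha
    · exact ⟨l, by simp, mul_comm _ _⟩
    · exact ⟨k, mul_comm _ _, mul_left_cancel₀ ha (by linear_combination h)⟩

section Plane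

open Matrix

def cov (p q : ℤ) : D 2 := (p : ℂ) • coD 0 + (q : ℂ) • coD 1

@[simp] theorem coords_cov (p q : ℤ) : coords (cov p q) = ![(p : ℂ), q] := by
  ext i
  fin_cases i <;> simp [coords, cov, coD]

theorem coD_zero_eq_cov : (coD 0 : D 2) = cov 1 0 := by simp [cov]

theorem coD_one_eq_cov : (coD 1 : D 2) = cov 0 1 := by simp [cov]

theorem cov_inj {p q r s : ℤ} : cov p q = cov r s ↔ p = r ∧ q = s := by
  refine ⟨fun h => ?_, fun ⟨hp, hq⟩ => hp ▸ hq ▸ rfl⟩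
  have h' := congrArg coords h
  simp only [coords_cov] at h'
  exact ⟨by simpa using congrFun h' 0, by simpa using congrFun h' 1⟩

theorem cov_sub_cov (p q r s : ℤ) : cov p q - cov r s = cov (p - r) (q - s) := by
  simp only [cov]; push_cast; module

theorem cov_add_cov (p q r s : ℤ) : cov p q + cov r s = cov (p + r) (q + s) := by
  simp only [cov]; push_cast; module

theorem intCast_smul_cov (m p q : ℤ) : (m : ℂ) • cov p q = cov (m * p) (m * q) := by
  simp only [cov]; push_cast; module

-- Decidable form, so that `simp` settles `SameSer` between covectors with integer coordinates.
theorem sameSer_cov_iff {a b p q r s : ℤ} : SameSer (cov a b) (cov p q) (cov r s) ↔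
    (a ∣ p - r ∧ b ∣ q - s ∧ a * (q - s) = b * (p - r)) ∨
      (a ∣ p + r ∧ b ∣ q + s ∧ a * (q + s) = b * (p + r)) := by
  simp only [SameSer, cov_sub_cov, cov_add_cov, intCast_smul_cov, cov_inj, exists_or,
    Int.exists_eq_mul_and_eq_mul_iff]

theorem parallel_cov_iff {a b p q : ℤ} (hab : a ≠ 0 ∨ b ≠ 0) :
    Parallel (cov a b) (cov p q) ↔ a * q = b * p := by
  constructor
  · rintro ⟨t, ht⟩
    have h := congrArg coords ht
    rw [coords_smul, coords_cov, coords_cov] at h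
    have hp : (p : ℂ) = t * a := by simpa using congrFun h 0
    have hq : (q : ℂ) = t * b := by simpa using congrFun h 1
    exact_mod_cast (by rw [hp, hq]; ring : (a : ℂ) * q = b * p)
  · intro h
    have h' : (a : ℂ) * q = b * p := by exact_mod_cast h
    have hab' : (a : ℂ) ≠ 0 ∨ (b : ℂ) ≠ 0 := by exact_mod_cast hab
    rcases hab' with ha | hb
    · refine ⟨p / a, coords_injective (funext fun i => ?_)⟩
      fin_cases i <;> simp only [Fin.zero_eta, Fin.mk_one, Fin.isValue, coords_cov, coords_smul,
        Pi.smul_apply, smul_eq_mul, cons_val_zero, cons_val_one, cons_val_fin_one] <;> field_simp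
      linear_combination h'
    · refine ⟨q / b, coords_injective (funext fun i => ?_)⟩
      fin_cases i <;> simp only [Fin.zero_eta, Fin.mk_one, Fin.isValue, coords_cov, coords_smul,
        Pi.smul_apply, smul_eq_mul, cons_val_zero, cons_val_one, cons_val_fin_one] <;> field_simp
      linear_combination -h'

theorem wedge_eq_mul (α β : D 2) (u v : V 2) :
    wedge α β u v =
      (coords α 0 * coords β 1 - coords α 1 * coords β 0) * (u 0 * v 1 - u 1 * v 0) := by
  simp only [wedge, apply_eq_coords_dotProduct _ u, apply_eq_coords_dotProduct _ v, dotProduct,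
    Fin.sum_univ_two]
  ring

theorem det_mul_apply_vee {A : Finset (D 2)} {c : D 2 → ℂ} {a b d : ℂ}
    (hG : Gmatrix A c = !![a, b; b, d]) (hnd : NonDeg (Gform A c))
    {vee : D 2 → V 2} (hvee : ∀ ξ v, Gform A c (vee ξ) v = ξ v) (ξ η : D 2) :
    (a * d - b ^ 2) * ξ (vee η) = d * coords ξ 0 * coords η 0
      - b * (coords ξ 0 * coords η 1 + coords ξ 1 * coords η 0) + a * coords ξ 1 * coords η 1 := by
  have hdet : a * d - b ^ 2 ≠ 0 := by
    simpa [hG, det_fin_two_of, sq] using (nonDeg_Gform_iff A c).1 hnd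
  rw [apply_vee hnd hvee, hG, inv_def, adjugate_fin_two_of, det_fin_two_of, ← sq,
    Ring.inverse_eq_inv']
  simp only [dotProduct, mulVec, Matrix.smul_apply, of_apply, cons_val', cons_val_fin_one,
    smul_eq_mul, Fin.sum_univ_two, cons_val_zero, cons_val_one]
  field_simp
  ring

end Plane

section FiveCovectors

open Matrix

open Classical in
def fiveCovectors : Finset (D 2) := {cov 1 0, cov 2 0, cov 0 1, cov 1 1, cov 1 (-1)}

theorem Gmatrix_fiveCovectors (c : D 2 → ℂ) : Gmatrix fiveCovectors c =
    !![c (cov 1 0) + 4 * c (cov 2 0) + c (cov 1 1) + c (cov 1 (-1)), c (cov 1 1) - c (cov 1 (-1));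
      c (cov 1 1) - c (cov 1 (-1)), c (cov 0 1) + c (cov 1 1) + c (cov 1 (-1))] := by
  ext i j
  fin_cases i <;> fin_cases j <;>
    simp (disch := simp [cov_inj]) only [Gmatrix, fiveCovectors, Finset.sum_insert,
      Finset.sum_singleton, Matrix.add_apply, Matrix.smul_apply, vecMulVec_apply, smul_eq_mul,
      coords_cov, Fin.zero_eta, Fin.mk_one, of_apply, cons_val', cons_val_zero, cons_val_one,
      cons_val_fin_one, Int.cast_one, Int.cast_zero, Int.cast_ofNat, Int.cast_neg] <;> ring

open Classical in
theorem isSeries_fiveCovectors_cases {α : D 2} {Γ : Finset (D 2)} (hα : α ∈ fiveCovectors)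
    (hΓ : IsSeries fiveCovectors α Γ) : Γ = ∅ ∨
      α = cov 1 0 ∧ Γ = {cov 0 1, cov 1 1, cov 1 (-1)} ∨
      α = cov 2 0 ∧ (Γ = {cov 0 1} ∨ Γ = {cov 1 1, cov 1 (-1)}) ∨
      α = cov 0 1 ∧ (Γ = {cov 1 0, cov 1 1, cov 1 (-1)} ∨ Γ = {cov 2 0}) ∨
      α = cov 1 1 ∧ (Γ = {cov 1 0, cov 0 1} ∨ Γ = {cov 2 0, cov 1 (-1)}) ∨
      α = cov 1 (-1) ∧ (Γ = {cov 1 0, cov 0 1} ∨ Γ = {cov 2 0, cov 1 1}) := by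
  obtain rfl | ⟨β, hβ⟩ := Γ.eq_empty_or_nonempty
  · exact Or.inl rfl
  have hβA := hΓ.1 hβ
  rw [hΓ.eq_seriesThrough hβ]
  simp only [fiveCovectors, Finset.mem_insert, Finset.mem_singleton] at hα hβA
  rcases hα with rfl | rfl | rfl | rfl | rfl <;> rcases hβA with rfl | rfl | rfl | rfl | rfl <;>
    simp [seriesThrough, fiveCovectors, Finset.filter_insert, Finset.filter_singleton,
      parallel_cov_iff, sameSer_cov_iff, cov_inj]

variable {c : D 2 → ℂ} {vee : D 2 → V 2}

theorem det_Gmatrix_fiveCovectors_ne_zero (hnd : NonDeg (Gform fiveCovectors c)) :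
    (c (cov 1 0) + 4 * c (cov 2 0) + c (cov 1 1) + c (cov 1 (-1))) *
      (c (cov 0 1) + c (cov 1 1) + c (cov 1 (-1))) - (c (cov 1 1) - c (cov 1 (-1))) ^ 2 ≠ 0 := by
  simpa [Gmatrix_fiveCovectors, det_fin_two_of, sq] using (nonDeg_Gform_iff _ c).1 hnd

theorem coordinate_covectors_orthogonal_iff (hnd : NonDeg (Gform fiveCovectors c))
    (hvee : ∀ ξ v, Gform fiveCovectors c (vee ξ) v = ξ v) :
    cov 1 0 (vee (cov 0 1)) = 0 ↔ c (cov 1 1) = c (cov 1 (-1)) := by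
  have h := det_mul_apply_vee (Gmatrix_fiveCovectors c) hnd hvee (cov 1 0) (cov 0 1)
  simp only [coords_cov, cons_val_zero, cons_val_one, cons_val_fin_one, Int.cast_one,
    Int.cast_zero] at h
  constructor
  · intro h0
    rw [h0, mul_zero] at h
    linear_combination h
  · intro hpm
    refine (mul_eq_zero.1 ?_).resolve_left (det_Gmatrix_fiveCovectors_ne_zero hnd)
    rw [h, hpm]
    ring

theorem Gmatrix_fiveCovectors_diag_ne_zero (hnd : NonDeg (Gform fiveCovectors c))
    (hpm : c (cov 1 1) = c (cov 1 (-1))) :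
    c (cov 1 0) + 4 * c (cov 2 0) + 2 * c (cov 1 1) ≠ 0 ∧ c (cov 0 1) + 2 * c (cov 1 1) ≠ 0 := by
  have h := det_Gmatrix_fiveCovectors_ne_zero hnd
  rw [← hpm, sub_self] at h
  refine mul_ne_zero_iff.1 fun h0 => h ?_
  linear_combination h0

theorem apply_vee_of_diagonal (hnd : NonDeg (Gform fiveCovectors c))
    (hvee : ∀ ξ v, Gform fiveCovectors c (vee ξ) v = ξ v) (hpm : c (cov 1 1) = c (cov 1 (-1)))
    (ξ η : D 2) :
    ξ (vee η) = coords ξ 0 * coords η 0 / (c (cov 1 0) + 4 * c (cov 2 0) + 2 * c (cov 1 1)) +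
      coords ξ 1 * coords η 1 / (c (cov 0 1) + 2 * c (cov 1 1)) := by
  have h := det_mul_apply_vee (Gmatrix_fiveCovectors c) hnd hvee ξ η
  obtain ⟨ha, hd⟩ := Gmatrix_fiveCovectors_diag_ne_zero hnd hpm
  rw [← hpm, sub_self] at h
  field_simp
  linear_combination h

open Classical in
theorem isSeries_fiveCovectors_two_zero : IsSeries fiveCovectors (cov 2 0) {cov 0 1} := by
  convert isSeries_seriesThrough fiveCovectors (cov 2 0) (cov 0 1) using 1
  simp [seriesThrough, fiveCovectors, Finset.filter_insert, Finset.filter_singleton,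
    parallel_cov_iff, sameSer_cov_iff]

open Classical in
theorem isSeries_fiveCovectors_one_one :
    IsSeries fiveCovectors (cov 1 1) {cov 1 0, cov 0 1} := by
  convert isSeries_seriesThrough fiveCovectors (cov 1 1) (cov 1 0) using 1
  simp [seriesThrough, fiveCovectors, Finset.filter_insert, Finset.filter_singleton,
    parallel_cov_iff, sameSer_cov_iff]

theorem relations_of_seriesCond (hnd : NonDeg (Gform fiveCovectors c))
    (hvee : ∀ ξ v, Gform fiveCovectors c (vee ξ) v = ξ v) (h₂ : c (cov 0 1) ≠ 0)
    (h : SeriesCond fiveCovectors c (fun ξ η => ξ (vee η))) :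
    c (cov 1 1) = c (cov 1 (-1)) ∧
      2 * c (cov 2 0) * c (cov 0 1) = c (cov 1 1) * (c (cov 1 0) - c (cov 0 1)) := by
  classical
  have hser₁ := h _ (by simp [fiveCovectors]) _ isSeries_fiveCovectors_two_zero
    (Pi.single 0 1) (Pi.single 1 1)
  simp only [Finset.sum_singleton, wedge_eq_mul, coords_cov, cons_val_zero, cons_val_one,
    cons_val_fin_one, Int.cast_zero, Int.cast_ofNat, Pi.single_eq_same, Fin.zero_ne_one,
    ne_eq, not_false_eq_true, Pi.single_eq_of_ne] at hser₁
  have hpm : c (cov 1 1) = c (cov 1 (-1)) := by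
    refine (coordinate_covectors_orthogonal_iff hnd hvee).1 ?_
    have : cov 2 0 = (2 : ℂ) • cov 1 0 :=
      coords_injective (by ext i; fin_cases i <;> simp [coords_smul])
    rw [this, LinearMap.smul_apply] at hser₁
    refine (mul_eq_zero.1 ?_).resolve_left h₂
    linear_combination hser₁ / 4
  refine ⟨hpm, ?_⟩
  have hser₂ := h _ (by simp [fiveCovectors]) _ isSeries_fiveCovectors_one_one
    (Pi.single 0 1) (Pi.single 1 1)
  obtain ⟨ha, hd⟩ := Gmatrix_fiveCovectors_diag_ne_zero hnd hpm
  rw [Finset.sum_insert (by simp [cov_inj]), Finset.sum_singleton] at hser₂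
  simp only [apply_vee_of_diagonal hnd hvee hpm, wedge_eq_mul, coords_cov, cons_val_zero,
    cons_val_one, cons_val_fin_one, Int.cast_zero, Int.cast_one, Pi.single_eq_same,
    Fin.zero_ne_one, ne_eq, not_false_eq_true, Pi.single_eq_of_ne] at hser₂
  field_simp at hser₂
  linear_combination hser₂ / 2

theorem seriesCond_of_relations (hnd : NonDeg (Gform fiveCovectors c))
    (hvee : ∀ ξ v, Gform fiveCovectors c (vee ξ) v = ξ v) (hpm : c (cov 1 1) = c (cov 1 (-1)))
    (hrel : 2 * c (cov 2 0) * c (cov 0 1) = c (cov 1 1) * (c (cov 1 0) - c (cov 0 1))) :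
    SeriesCond fiveCovectors c (fun ξ η => ξ (vee η)) := by
  obtain ⟨ha, hd⟩ := Gmatrix_fiveCovectors_diag_ne_zero hnd hpm
  have hip := apply_vee_of_diagonal hnd hvee hpm
  set a := c (cov 1 0) + 4 * c (cov 2 0) + 2 * c (cov 1 1)
  set d := c (cov 0 1) + 2 * c (cov 1 1)
  intro α hα Γ hΓ u v
  rcases isSeries_fiveCovectors_cases hα hΓ with rfl | ⟨rfl, rfl⟩ | ⟨rfl, rfl | rfl⟩ |
    ⟨rfl, rfl | rfl⟩ | ⟨rfl, rfl | rfl⟩ | ⟨rfl, rfl | rfl⟩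
  · simp
  all_goals
    simp (disch := simp [cov_inj]) only [Finset.sum_insert, Finset.sum_singleton, hip,
      wedge_eq_mul, coords_cov, cons_val_zero, cons_val_one, cons_val_fin_one, Int.cast_zero,
      Int.cast_one, Int.cast_neg, Int.cast_ofNat, ← hpm]
    field_simp
  · ring
  · ring
  · ring
  · ring
  · ring
  -- for `α = e¹ ± e²` each sum is `± (c₂ a - c₁ d)`, twice the relation, up to the wedge factor
  · linear_combination 2 * (u 0 * v 1 - u 1 * v 0) * hrel
  · linear_combination -2 * (u 0 * v 1 - u 1 * v 0) * hrel
  · linear_combination -2 * (u 0 * v 1 - u 1 * v 0) * hrel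
  · linear_combination 2 * (u 0 * v 1 - u 1 * v 0) * hrel

end FiveCovectors

theorem five_covectors_general (c₁ tc₁ c₂ cp cm : ℂ)
    (h2 : c₂ ≠ 0)
    (A : Finset (D 2))
    (hA : ∀ ξ, ξ ∈ A ↔ ξ = coD 0 ∨ ξ = (2 : ℂ) • coD 0 ∨ ξ = coD 1 ∨
      ξ = coD 0 + coD 1 ∨ ξ = coD 0 - coD 1)
    (c : D 2 → ℂ) (hc1 : c (coD 0) = c₁) (hct : c ((2 : ℂ) • coD 0) = tc₁)
    (hc2 : c (coD 1) = c₂)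
    (hcp : c (coD 0 + coD 1) = cp) (hcm : c (coD 0 - coD 1) = cm)
    (hnd : NonDeg (Gform A c))
    (vee : D 2 → V 2) (hvee : ∀ ξ : D 2, ∀ v : V 2, Gform A c (vee ξ) v = ξ v) :
    (SeriesCond A c (fun ξ η => ξ (vee η)) ↔ (cp = cm ∧ 2 * tc₁ * c₂ = cp * (c₁ - c₂))) ∧
      (cp = cm ↔ (coD 0 : D 2) (vee (coD 1)) = 0) := by
  simp only [coD_zero_eq_cov, coD_one_eq_cov, two_smul, cov_add_cov, cov_sub_cov, Int.reduceAdd,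
    Int.reduceSub] at *
  obtain rfl : A = fiveCovectors := by
    ext ξ
    simp [hA, fiveCovectors]
  subst hc1 hct hc2 hcp hcm
  exact ⟨⟨relations_of_seriesCond hnd hvee h2,
    fun ⟨hpm, hrel⟩ => seriesCond_of_relations hnd hvee hpm hrel⟩,
    (coordinate_covectors_orthogonal_iff hnd hvee).symm⟩

/-- Proposition 4: the system `e¹, 2e¹, e², e¹+e², e¹−e²` is a
trigonometric ∨-system iff `c₊ = c₋` and `2c̃₁c₂ = c₊(c₁ − c₂)`; moreover
`c₊ = c₋ ↔ (e¹,e²) = 0`. -/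
theorem five_covectors (c₁ tc₁ c₂ cp cm : ℂ)
    (h1 : c₁ ≠ 0) (ht : tc₁ ≠ 0) (h2 : c₂ ≠ 0) (hp : cp ≠ 0) (hm : cm ≠ 0)
    (A : Finset (D 2))
    (hA : ∀ ξ, ξ ∈ A ↔ ξ = coD 0 ∨ ξ = (2 : ℂ) • coD 0 ∨ ξ = coD 1 ∨
      ξ = coD 0 + coD 1 ∨ ξ = coD 0 - coD 1)
    (c : D 2 → ℂ) (hc1 : c (coD 0) = c₁) (hct : c ((2 : ℂ) • coD 0) = tc₁)
    (hc2 : c (coD 1) = c₂)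
    (hcp : c (coD 0 + coD 1) = cp) (hcm : c (coD 0 - coD 1) = cm)
    (hnd : NonDeg (Gform A c))
    (vee : D 2 → V 2) (hvee : ∀ ξ : D 2, ∀ v : V 2, Gform A c (vee ξ) v = ξ v) :
    (SeriesCond A c (fun ξ η => ξ (vee η)) ↔ (cp = cm ∧ 2 * tc₁ * c₂ = cp * (c₁ - c₂))) ∧
      (cp = cm ↔ (coD 0 : D 2) (vee (coD 1)) = 0) :=
  five_covectors_general c₁ tc₁ c₂ cp cm h2 A hA c hc1 hct hc2 hcp hcm hnd vee hvee
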